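/- arXiv:1408.0056 — 4 statements merged into one kernel-verified Lean document; each statement's English description precedes it below -/
import Mathlib

section
/- If a nonzero right R-module M is anti-coHopfian (i.e., M is isomorphic to every nonzero submodule of itself), then M is uniform and noetherian. -/
universe u v w

/-- A module is *uniform* if it is nonzero and any two nonzero submodules intersect
nontrivially. -/
def IsUniformModule (R : Type u) [Ring R] (M : Type v) [AddCommGroup M] [Module R M] : Prop :=
  Nontrivial M ∧ ∀ N₁ N₂ : Submodule R M, N₁ ≠ ⊥ → N₂ ≠ ⊥ → N₁ ⊓ N₂ ≠ ⊥

/-- The classes `ζ_α`, defined by transfinite induction: `ζ_1` is the class of uniform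
modules, and for `α > 1`, `M ∈ ζ_α` iff every nonzero submodule `N` of `M` with `N ≇ M`
lies in `ζ_β` for some `β < α`. -/
def ModuleZeta (R : Type u) [Ring R] (α : Ordinal.{v}) (M : Type v) [AddCommGroup M]
    [Module R M] : Prop :=
  (α = 1 ∧ IsUniformModule R M) ∨
    (1 < α ∧ ∀ N : Submodule R M, N ≠ ⊥ → ¬ Nonempty (N ≃ₗ[R] M) →
      ∃ β, ∃ _ : β < α, ModuleZeta R β N)
termination_by α

/-- A module has couniserial dimension iff it lies in `ζ_α` for some ordinal `α`. -/
def HasCUDim (R : Type u) [Ring R] (M : Type v) [AddCommGroup M] [Module R M] : Prop :=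
  ∃ α : Ordinal.{v}, ModuleZeta R α M

open Classical in
/-- The couniserial dimension of a module: the least `α` with `M ∈ ζ_α`, with the
convention that the zero module has couniserial dimension `0`. -/
noncomputable def cuDim (R : Type u) [Ring R] (M : Type v) [AddCommGroup M] [Module R M] :
    Ordinal.{v} :=
  if Subsingleton M then 0 else sInf {α | ModuleZeta R α M}

/-- A submodule is *essential* if it meets every nonzero submodule nontrivially. -/
def IsEssentialSubmodule (R : Type u) [Ring R] {M : Type v} [AddCommGroup M] [Module R M]
    (N : Submodule R M) : Prop :=
  ∀ K : Submodule R M, K ≠ ⊥ → N ⊓ K ≠ ⊥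

/-- A module is *indecomposable* if it is nonzero and is not an (internal) direct sum of two
nonzero submodules. -/
def IsIndecomposableModule (R : Type u) [Ring R] (M : Type v) [AddCommGroup M]
    [Module R M] : Prop :=
  Nontrivial M ∧ ∀ A B : Submodule R M, IsCompl A B → A = ⊥ ∨ B = ⊥

/-- A module is *coHopfian* if it is not isomorphic to a proper submodule of itself. -/
def IsCoHopfianModule (R : Type u) [Ring R] (M : Type v) [AddCommGroup M] [Module R M] : Prop :=
  ∀ N : Submodule R M, Nonempty (M ≃ₗ[R] N) → N = ⊤

/-- A module is *fully coHopfian* if every submodule is coHopfian. -/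
def IsFullyCoHopfianModule (R : Type u) [Ring R] (M : Type v) [AddCommGroup M]
    [Module R M] : Prop :=
  ∀ N : Submodule R M, IsCoHopfianModule R N

/-- A module `N` has the *cancellation property* if `N ⊕ A ≅ N ⊕ B` implies `A ≅ B`. -/
def HasCancellation (R : Type u) [Ring R] (N : Type v) [AddCommGroup N] [Module R N] : Prop :=
  ∀ (A B : Type v) [AddCommGroup A] [Module R A] [AddCommGroup B] [Module R B],
    Nonempty ((N × A) ≃ₗ[R] (N × B)) → Nonempty (A ≃ₗ[R] B)

/-- A module is *Dedekind finite* if it is not isomorphic to a proper direct summand of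
itself. -/
def IsDedekindFiniteModule (R : Type u) [Ring R] (M : Type v) [AddCommGroup M]
    [Module R M] : Prop :=
  ∀ A B : Submodule R M, IsCompl A B → Nonempty (M ≃ₗ[R] A) → B = ⊥

/-- A ring is *semiprime* if it has no nonzero nilpotent two-sided ideal; equivalently,
`a R a = 0` implies `a = 0`. -/
def IsSemiprimeRing (R : Type u) [Ring R] : Prop :=
  ∀ a : R, (∀ x : R, a * x * a = 0) → a = 0

/-- An ideal is an *annihilator ideal* if it is the annihilator of a subset of the ring. -/
def IsAnnihilatorIdeal (R : Type u) [Ring R] (I : Ideal R) : Prop :=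
  ∃ S : Set R, (I : Set R) = {x : R | ∀ s ∈ S, x * s = 0}

/-- A module has *uniform dimension `n`* if it contains `n` independent uniform submodules
whose direct sum is essential. -/
def HasFiniteUniformDim (R : Type u) [Ring R] (M : Type v) [AddCommGroup M] [Module R M]
    (n : ℕ) : Prop :=
  ∃ U : Fin n → Submodule R M, iSupIndep U ∧ (∀ i, IsUniformModule R (U i)) ∧
    IsEssentialSubmodule R (⨆ i, U i)

/-- A ring is *Goldie* if it has the ascending chain condition on annihilator ideals and
finite uniform dimension as a module over itself. -/
def IsGoldieRing (R : Type u) [Ring R] : Prop :=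
  (∀ f : ℕ → Ideal R, (∀ n, IsAnnihilatorIdeal R (f n)) → Monotone f →
      ∃ n, ∀ k, n ≤ k → f k = f n) ∧
    ∃ n : ℕ, HasFiniteUniformDim R R n

/-- An anti-coHopfian module (a nonzero module isomorphic to every nonzero
submodule of itself) is uniform and noetherian. -/
theorem stmt0 (R : Type u) [Ring R] (M : Type v) [AddCommGroup M] [Module R M] [Nontrivial M]
    (hanti : ∀ N : Submodule R M, N ≠ ⊥ → Nonempty (M ≃ₗ[R] N)) :
    IsUniformModule R M ∧ IsNoetherian R M := by
  classical
  obtain ⟨x, hx⟩ := exists_ne (0 : M)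
  have hspan : (Submodule.span R {x}) ≠ ⊥ := by
    simp [Submodule.span_singleton_eq_bot, hx]
  obtain ⟨e⟩ := hanti _ hspan
  have hMfin : Module.Finite R M := by
    have h1 : Module.Finite R (Submodule.span R ({x} : Set M)) :=
      Module.Finite.iff_fg.mpr (Submodule.fg_span (Set.finite_singleton x))
    exact Module.Finite.equiv e.symm
  have hnoeth : IsNoetherian R M := by
    rw [isNoetherian_def]
    intro N
    rcases eq_or_ne N ⊥ with rfl | hN
    · exact Submodule.fg_bot
    · obtain ⟨f⟩ := hanti N hN
      have : Module.Finite R N := Module.Finite.equiv f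
      exact Module.Finite.iff_fg.mp this
  refine ⟨⟨inferInstance, ?_⟩, hnoeth⟩
  by_contra hcon
  push_neg at hcon
  obtain ⟨N₁, N₂, hN₁, hN₂, hinter⟩ := hcon
  -- the set of nonzero submodules having a nonzero "complementary" submodule
  set T : Set (Submodule R M) :=
    {B | B ≠ ⊥ ∧ ∃ A : Submodule R M, A ≠ ⊥ ∧ A ⊓ B = ⊥} with hT
  have hTne : T.Nonempty := ⟨N₂, hN₂, N₁, hN₁, hinter⟩
  have hwf : WellFounded ((· > ·) : Submodule R M → Submodule R M → Prop) :=
    (isNoetherian_iff (R := R) (M := M)).mp hnoeth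
  obtain ⟨B, hBT, hBmax⟩ := hwf.has_min T hTne
  obtain ⟨hBne, A, hAne, hAB⟩ := hBT
  obtain ⟨φ⟩ := hanti A hAne
  set f : M →ₗ[R] M := A.subtype ∘ₗ (φ : M →ₗ[R] A) with hf
  have hfinj : Function.Injective f := by
    intro a b hab
    exact φ.injective (Subtype.ext hab)
  have hfrange : ∀ m : M, f m ∈ A := fun m => (φ m).2
  set A' : Submodule R M := Submodule.map f A with hA'
  set B' : Submodule R M := Submodule.map f B with hB'
  have hA'le : A' ≤ A := by
    rintro _ ⟨a, -, rfl⟩; exact hfrange a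
  have hB'le : B' ≤ A := by
    rintro _ ⟨b, -, rfl⟩; exact hfrange b
  have hmapne : ∀ C : Submodule R M, C ≠ ⊥ → Submodule.map f C ≠ ⊥ := by
    intro C hC
    obtain ⟨c, hc, hc0⟩ := Submodule.ne_bot_iff C |>.mp hC
    refine Submodule.ne_bot_iff _ |>.mpr ⟨f c, Submodule.mem_map_of_mem hc, ?_⟩
    intro h0
    exact hc0 (hfinj (by simpa using h0))
  have hA'ne : A' ≠ ⊥ := hmapne A hAne
  have hB'ne : B' ≠ ⊥ := hmapne B hBne
  have hA'B' : A' ⊓ B' = ⊥ := by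
    rw [hA', hB', ← Submodule.map_inf f hfinj, hAB, Submodule.map_bot]
  -- A' is disjoint from B ⊔ B'
  have hkey : A' ⊓ (B ⊔ B') = ⊥ := by
    apply (Submodule.eq_bot_iff _).mpr
    intro y hy
    obtain ⟨hyA', hy2⟩ := Submodule.mem_inf.mp hy
    obtain ⟨b, hb, b', hb', rfl⟩ := Submodule.mem_sup.mp hy2
    have hbA : b ∈ A := by
      have h1 : (b + b') - b' ∈ A := sub_mem (hA'le hyA') (hB'le hb')
      simpa using h1
    have hb0 : b = 0 := by
      have : b ∈ A ⊓ B := ⟨hbA, hb⟩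
      rw [hAB] at this; simpa using this
    subst hb0
    have : b' ∈ A' ⊓ B' := ⟨by simpa using hyA', hb'⟩
    rw [hA'B'] at this
    simpa using this
    
  -- B ⊔ B' is strictly bigger than B and lies in T : contradiction with maximality
  have hBlt : B < B ⊔ B' := by
    refine lt_of_le_of_ne le_sup_left ?_
    intro hEq
    have hB'B : B' ≤ B := hEq ▸ le_sup_right
    have : B' ≤ A ⊓ B := le_inf hB'le hB'B
    rw [hAB] at this
    exact hB'ne (le_bot_iff.mp this)
  have hmem : B ⊔ B' ∈ T := by
    refine ⟨?_, A', hA'ne, hkey⟩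
    intro h
    exact hBne (le_bot_iff.mp (h ▸ le_sup_left (a := B) (b := B')))
  exact hBmax _ hmem hBlt
end

section
/- A right R-module M has couniserial dimension if and only if for every descending chain of submodules M_1 ≥ M_2 ≥ ... of M, there exists n ≥ 1 such that either M_n is uniform or M_n ≅ M_k for all k ≥ n. -/
universe u v w

/-!
For `M ∈ ζ_α` argue by induction on `α`: a descending chain either consists of copies of `M`,
or becomes zero, or has a nonzero member `M_n ≇ M`; that member lies in some `ζ_β` with
`β < α`, and the tail of the chain is a descending chain inside it.

Conversely, if every submodule `N ≇ M` has couniserial dimension, then `M ∈ ζ_α` for any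
`α > 1` beyond all of their dimensions. So a module without couniserial dimension has a
submodule `N ≇ M` without one, and iterating yields a descending chain of non-uniform
submodules, none isomorphic to its successor.
-/

section CouniserialDimension

variable {R : Type u} [Ring R] {M N : Type v} [AddCommGroup M] [Module R M]
  [AddCommGroup N] [Module R N]

theorem IsUniformModule.of_injective [Nontrivial M] (f : M →ₗ[R] N)
    (hf : Function.Injective f) (h : IsUniformModule R N) : IsUniformModule R M := by
  refine ⟨‹_›, fun N₁ N₂ h₁ h₂ hinf => ?_⟩
  have hmap : ∀ P : Submodule R M, P ≠ ⊥ → P.map f ≠ ⊥ := fun P hP hPf =>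
    hP (Submodule.map_injective_of_injective hf (hPf.trans (Submodule.map_bot f).symm))
  apply h.2 _ _ (hmap N₁ h₁) (hmap N₂ h₂)
  rw [← Submodule.map_inf f hf, hinf, Submodule.map_bot]

theorem IsUniformModule.congr (e : M ≃ₗ[R] N) (h : IsUniformModule R M) :
    IsUniformModule R N :=
  haveI := h.1
  haveI : Nontrivial N := e.symm.toEquiv.nontrivial
  h.of_injective e.symm.toLinearMap e.symm.injective

theorem IsUniformModule.submodule (h : IsUniformModule R M) {P : Submodule R M}
    (hP : P ≠ ⊥) : IsUniformModule R P :=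
  haveI := Submodule.nontrivial_iff_ne_bot.2 hP
  h.of_injective P.subtype P.injective_subtype

theorem IsUniformModule.hasCUDim (h : IsUniformModule R M) : HasCUDim R M :=
  ⟨1, by rw [ModuleZeta]; exact .inl ⟨rfl, h⟩⟩

theorem ModuleZeta.congr {α : Ordinal.{v}} (e : M ≃ₗ[R] N) (h : ModuleZeta R α M) :
    ModuleZeta R α N := by
  induction α using WellFoundedLT.induction generalizing M N with
  | _ α IH =>
    rw [ModuleZeta] at h ⊢
    rcases h with ⟨hα, hu⟩ | ⟨hα, hζ⟩
    · exact .inl ⟨hα, hu.congr e⟩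
    refine .inr ⟨hα, fun P hP hPN => ?_⟩
    let eP : P ≃ₗ[R] P.map (e.symm : N →ₗ[R] M) := e.symm.submoduleMap P
    have hP' : P.map (e.symm : N →ₗ[R] M) ≠ ⊥ := Submodule.map_eq_bot_iff.not.2 hP
    obtain ⟨β, hβ, hz⟩ := hζ _ hP' fun ⟨u⟩ => hPN ⟨(eP.trans u).trans e⟩
    exact ⟨β, hβ, IH β hβ eP.symm hz⟩

theorem HasCUDim.congr (e : M ≃ₗ[R] N) (h : HasCUDim R M) : HasCUDim R N :=
  h.imp fun _ hα => hα.congr e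

def EventuallyUniformOrIsoConstant (f : ℕ → Submodule R M) : Prop :=
  ∃ n, IsUniformModule R (f n) ∨ ∀ k, n ≤ k → Nonempty (f n ≃ₗ[R] f k)

theorem EventuallyUniformOrIsoConstant.of_equiv_shift {f : ℕ → Submodule R M}
    {g : ℕ → Submodule R N} (n₀ : ℕ) (e : ∀ k, g k ≃ₗ[R] f (n₀ + k))
    (hg : EventuallyUniformOrIsoConstant g) : EventuallyUniformOrIsoConstant f := by
  obtain ⟨m, hu | hiso⟩ := hg
  · exact ⟨n₀ + m, .inl (hu.congr (e m))⟩
  refine ⟨n₀ + m, .inr fun _ hk => ?_⟩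
  obtain ⟨j, rfl⟩ := Nat.exists_eq_add_of_le (le_of_add_le_left hk)
  exact ⟨((e m).symm.trans (hiso j (by omega)).some).trans (e j)⟩

theorem eventuallyUniformOrIsoConstant_of_eq_bot {f : ℕ → Submodule R M} (hf : Antitone f)
    {n : ℕ} (hn : f n = ⊥) : EventuallyUniformOrIsoConstant f :=
  ⟨n, .inr fun _ hk => ⟨LinearEquiv.ofEq _ _ (hn.trans (eq_bot_iff.2 (hn ▸ hf hk)).symm)⟩⟩

theorem ModuleZeta.eventuallyUniformOrIsoConstant {α : Ordinal.{v}} (h : ModuleZeta R α M)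
    {f : ℕ → Submodule R M} (hf : Antitone f) : EventuallyUniformOrIsoConstant f := by
  induction α using WellFoundedLT.induction generalizing M with
  | _ α IH =>
    by_cases hbot : ∃ n, f n = ⊥
    · exact eventuallyUniformOrIsoConstant_of_eq_bot hf hbot.choose_spec
    push Not at hbot
    rw [ModuleZeta] at h
    rcases h with ⟨-, hu⟩ | ⟨-, hζ⟩
    · exact ⟨0, .inl (hu.submodule (hbot 0))⟩
    by_cases hiso : ∀ n, Nonempty (f n ≃ₗ[R] M)
    · exact ⟨0, .inr fun k _ => ⟨(hiso 0).some.trans (hiso k).some.symm⟩⟩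
    obtain ⟨n₀, hn₀⟩ := not_forall.1 hiso
    obtain ⟨β, hβ, hz⟩ := hζ (f n₀) (hbot n₀) hn₀
    have hg : Antitone fun k => (f (n₀ + k)).comap (f n₀).subtype := fun _ _ hjk =>
      Submodule.comap_mono (hf (by omega))
    exact (IH β hβ hz hg).of_equiv_shift n₀ fun k =>
      Submodule.comapSubtypeEquivOfLe (hf (Nat.le_add_right n₀ k))

theorem hasCUDim_of_forall_not_equiv
    (h : ∀ P : Submodule R M, ¬ Nonempty (P ≃ₗ[R] M) → HasCUDim R P) : HasCUDim R M := by
  have : ∀ P : Submodule R M, ∃ α, ¬ Nonempty (P ≃ₗ[R] M) → ModuleZeta R α P := fun P => by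
    by_cases hP : Nonempty (P ≃ₗ[R] M)
    · exact ⟨0, fun hPM => (hPM hP).elim⟩
    · exact (h P hP).imp fun _ hα _ => hα
  choose F hF using this
  refine ⟨max 2 (Order.succ (⨆ P, F P)), ?_⟩
  rw [ModuleZeta]
  refine .inr ⟨lt_max_of_lt_left one_lt_two, fun P _ hP => ⟨F P, ?_, hF P hP⟩⟩
  exact lt_max_of_lt_right (Order.lt_succ_iff.2 (le_ciSup Ordinal.bddAbove_of_small P))

theorem Submodule.exists_le_not_equiv_not_hasCUDim {P : Submodule R M} (hP : ¬ HasCUDim R P) :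
    ∃ Q ≤ P, ¬ Nonempty (Q ≃ₗ[R] P) ∧ ¬ HasCUDim R Q := by
  have hbad := mt hasCUDim_of_forall_not_equiv hP
  push Not at hbad
  obtain ⟨Q, hQP, hQ⟩ := hbad
  let e : Q ≃ₗ[R] Q.map P.subtype := Submodule.equivMapOfInjective _ P.injective_subtype Q
  exact ⟨Q.map P.subtype, Submodule.map_subtype_le P Q, fun ⟨u⟩ => hQP.false (e.trans u),
    mt (HasCUDim.congr e.symm) hQ⟩

theorem hasCUDim_of_forall_antitone
    (h : ∀ f : ℕ → Submodule R M, Antitone f → EventuallyUniformOrIsoConstant f) :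
    HasCUDim R M := by
  by_contra hM
  let r : Submodule R M → Submodule R M → Prop := fun Q P =>
    Q ≤ P ∧ ¬ Nonempty (Q ≃ₗ[R] P) ∧ ¬ HasCUDim R Q
  have not_acc : ∀ P : Submodule R M, ¬ HasCUDim R P → ¬ Acc r P := fun P hP hacc => by
    induction hacc with
    | intro P _ ih =>
      obtain ⟨Q, hQP, hQ⟩ := P.exists_le_not_equiv_not_hasCUDim hP
      exact ih Q ⟨hQP, hQ⟩ hQ.2
  obtain ⟨f, -, hf⟩ := not_acc_iff_exists_descending_chain.1
    (not_acc (⊤ : Submodule R M) (mt (HasCUDim.congr Submodule.topEquiv) hM))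
  obtain ⟨n, hu | hiso⟩ := h (fun n => f (n + 1)) (antitone_nat_of_succ_le fun n => (hf (n + 1)).1)
  · exact (hf n).2.2 hu.hasCUDim
  · exact (hf (n + 1)).2.1 ⟨(hiso (n + 1) n.le_succ).some.symm⟩

end CouniserialDimension

/-- `M` has couniserial dimension iff for every descending chain of submodules
`M_1 ≥ M_2 ≥ ⋯` there is `n` with `M_n` uniform or `M_n ≅ M_k` for all `k ≥ n`. -/
theorem stmt1 (R : Type u) [Ring R] (M : Type v) [AddCommGroup M] [Module R M] :
    HasCUDim R M ↔
      ∀ f : ℕ → Submodule R M, (∀ n, f (n + 1) ≤ f n) →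
        ∃ n, IsUniformModule R (f n) ∨ ∀ k, n ≤ k → Nonempty (f n ≃ₗ[R] f k) := by
  refine ⟨fun ⟨_, hα⟩ f hf => hα.eventuallyUniformOrIsoConstant (antitone_nat_of_succ_le hf),
    fun h => hasCUDim_of_forall_antitone fun f hf => h f fun n => hf n.le_succ⟩
end

section
/- Every nonzero right R-module M that has couniserial dimension contains a uniform submodule. -/
universe u v w

/-! Induct on `α`. Modules in `ζ_1` are uniform. For `α > 1`, a nonzero submodule `P ≇ M` lies
in some `ζ_β` with `β < α` and contains a uniform submodule by induction. Otherwise every nonzero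
submodule is isomorphic to `M`, in particular to a cyclic one, so all submodules are finitely
generated and `M` is noetherian. If then `A ⊓ B = 0` with `A, B ≠ 0`, the isomorphism `M ≅ A`
embeds `M × B` into `M`, which forces `B = 0` in a noetherian module; so `M` is uniform. -/

open Submodule

section

variable {R : Type u} [Ring R]

theorem IsUniformModule.of_equiv {M₁ : Type v} {M₂ : Type w} [AddCommGroup M₁] [Module R M₁]
    [AddCommGroup M₂] [Module R M₂] (e : M₁ ≃ₗ[R] M₂) (h : IsUniformModule R M₁) :
    IsUniformModule R M₂ := by
  obtain ⟨_, huni⟩ := h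
  let φ := (orderIsoMapComap e).symm
  refine ⟨e.symm.toEquiv.nontrivial, fun N₁ N₂ h₁ h₂ h => ?_⟩
  refine huni (φ N₁) (φ N₂) ((map_eq_bot_iff φ).not.mpr h₁) ((map_eq_bot_iff φ).not.mpr h₂) ?_
  rw [← φ.map_inf, h, φ.map_bot]

variable {M : Type v} [AddCommGroup M] [Module R M]

theorem eq_bot_of_disjoint_range_of_injective [IsNoetherian R M] {f : M →ₗ[R] M}
    (hf : Function.Injective f) {B : Submodule R M} (hB : Disjoint (LinearMap.range f) B) :
    B = ⊥ := by
  have hinj : Function.Injective (f.coprod B.subtype) := by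
    rw [← LinearMap.ker_eq_bot, LinearMap.ker_coprod_of_disjoint_range f B.subtype
      (by rwa [range_subtype]), LinearMap.ker_eq_bot.mpr hf, ker_subtype, prod_bot]
  exact subsingleton_iff_eq_bot.mp (IsNoetherian.subsingleton_of_prod_injective _ hinj)

theorem isNoetherian_of_forall_nonempty_equiv [Nontrivial M]
    (hall : ∀ P : Submodule R M, P ≠ ⊥ → Nonempty (P ≃ₗ[R] M)) : IsNoetherian R M := by
  obtain ⟨x, hx⟩ := exists_ne (0 : M)
  obtain ⟨e⟩ := hall (span R {x}) (by simpa using hx)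
  have : Module.Finite R M := Module.Finite.equiv e
  refine isNoetherian_def.mpr fun P => ?_
  rcases eq_or_ne P ⊥ with rfl | hP
  · exact fg_bot
  · obtain ⟨e⟩ := hall P hP
    exact Module.Finite.iff_fg.mp (.equiv e.symm)

theorem isUniformModule_of_forall_nonempty_equiv [Nontrivial M]
    (hall : ∀ P : Submodule R M, P ≠ ⊥ → Nonempty (P ≃ₗ[R] M)) : IsUniformModule R M := by
  have := isNoetherian_of_forall_nonempty_equiv hall
  refine ⟨inferInstance, fun A B hA hB hAB => hB ?_⟩
  obtain ⟨e⟩ := hall A hA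
  refine eq_bot_of_disjoint_range_of_injective (f := A.subtype ∘ₗ e.symm.toLinearMap)
    (A.injective_subtype.comp e.symm.injective) ?_
  rw [LinearMap.range_comp, LinearEquiv.range, Submodule.map_top, range_subtype, disjoint_iff, hAB]

theorem exists_isUniformModule_of_submodule {P : Submodule R M}
    (h : ∃ U : Submodule R P, U ≠ ⊥ ∧ IsUniformModule R U) :
    ∃ N : Submodule R M, N ≠ ⊥ ∧ IsUniformModule R N := by
  obtain ⟨U, hU, hUuni⟩ := h
  exact ⟨U.map P.subtype, fun h =>
    hU (map_injective_of_injective P.injective_subtype (by rw [h, Submodule.map_bot])),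
    hUuni.of_equiv (U.equivMapOfInjective _ P.injective_subtype)⟩

theorem ModuleZeta.exists_isUniformModule (α : Ordinal.{v}) :
    ∀ (M : Type v) [AddCommGroup M] [Module R M] [Nontrivial M], ModuleZeta R α M →
      ∃ N : Submodule R M, N ≠ ⊥ ∧ IsUniformModule R N := by
  induction α using WellFoundedLT.induction with
  | _ α ih =>
  intro M _ _ _ hM
  rw [ModuleZeta] at hM
  rcases hM with ⟨-, huni⟩ | ⟨-, hsub⟩
  · exact ⟨⊤, top_ne_bot, huni.of_equiv topEquiv.symm⟩
  by_cases hall : ∀ P : Submodule R M, P ≠ ⊥ → Nonempty (P ≃ₗ[R] M)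
  · exact ⟨⊤, top_ne_bot, (isUniformModule_of_forall_nonempty_equiv hall).of_equiv topEquiv.symm⟩
  push Not at hall
  obtain ⟨P, hP, hPM⟩ := hall
  obtain ⟨β, hβ, hPβ⟩ := hsub P hP (not_nonempty_iff.mpr hPM)
  have : Nontrivial P := nontrivial_iff_ne_bot.mpr hP
  exact exists_isUniformModule_of_submodule (ih β hβ P hPβ)

end

/-- Every nonzero module with couniserial dimension contains a uniform
submodule. -/
theorem stmt2 (R : Type u) [Ring R] (M : Type v) [AddCommGroup M] [Module R M] [Nontrivial M]
    (h : HasCUDim R M) :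
    ∃ N : Submodule R M, N ≠ ⊥ ∧ IsUniformModule R N := by
  obtain ⟨α, hα⟩ := h
  exact ModuleZeta.exists_isUniformModule α M hα
end

section
/- Let P be an anti-coHopfian projective right R-module and let E be an injective hull of P. If the countably infinite direct sum ⊕_{i=1}^∞ E has couniserial dimension, then P is injective. -/
universe u v w

/-!
Put `X = ⊕_ℕ E`. Since `P ↪ E` and `E ⊕ X ≅ X`, the modules `X` and `P ⊕ X` embed into each
other, and neither is uniform. Couniserial dimension makes such modules isomorphic: were they
not, each embedding would land in a non-isomorphic nonzero submodule and so push the `ζ`-level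
strictly down, and alternating the two embeddings would give an infinite descending chain of
ordinals. Hence `P` is a direct summand of `X`. Being isomorphic to each of its cyclic
submodules, `P` is cyclic, so its image meets only finitely many summands of `X` and `P` is a
retract of the injective module `E ^ n`.
-/

section CouniserialDimension

variable {R : Type u} [Ring R]

theorem LinearMap.range_ne_bot_of_injective {M N : Type*} [AddCommGroup M] [Module R M]
    [AddCommGroup N] [Module R N] [Nontrivial M] {f : M →ₗ[R] N} (hf : Function.Injective f) :
    LinearMap.range f ≠ ⊥ := by
  obtain ⟨x, hx⟩ := exists_ne (0 : M)
  exact (Submodule.ne_bot_iff _).2 ⟨f x, LinearMap.mem_range_self f x, (map_ne_zero_iff f hf).2 hx⟩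

variable {M N : Type v} [AddCommGroup M] [Module R M] [AddCommGroup N] [Module R N]

theorem IsUniformModule.of_linearEquiv (e : M ≃ₗ[R] N) (hM : IsUniformModule R M) :
    IsUniformModule R N := by
  obtain ⟨_, hM⟩ := hM
  refine ⟨e.injective.nontrivial, fun N₁ N₂ h₁ h₂ h => ?_⟩
  refine hM (N₁.map (e.symm : N →ₗ[R] M)) (N₂.map (e.symm : N →ₗ[R] M))
    (Submodule.map_eq_bot_iff.not.2 h₁) (Submodule.map_eq_bot_iff.not.2 h₂) ?_
  rw [← Submodule.map_inf _ e.symm.injective, h, Submodule.map_bot]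

theorem not_isUniformModule_prod [Nontrivial M] [Nontrivial N] :
    ¬ IsUniformModule R (M × N) := fun h =>
  h.2 _ _ (LinearMap.range_ne_bot_of_injective LinearMap.inl_injective)
    (LinearMap.range_ne_bot_of_injective LinearMap.inr_injective)
    LinearMap.isCompl_range_inl_inr.inf_eq_bot

theorem ModuleZeta.of_linearEquiv {α : Ordinal.{v}} (e : M ≃ₗ[R] N) (hM : ModuleZeta R α M) :
    ModuleZeta R α N := by
  induction α using WellFoundedLT.induction generalizing M N with
  | ind α IH =>
    rw [ModuleZeta] at hM ⊢
    rcases hM with ⟨rfl, hu⟩ | ⟨hα, hM⟩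
    · exact Or.inl ⟨rfl, hu.of_linearEquiv e⟩
    · refine Or.inr ⟨hα, fun K hK hKN => ?_⟩
      have eK : K ≃ₗ[R] K.map (e.symm : N →ₗ[R] M) := e.symm.submoduleMap K
      obtain ⟨β, hβ, hzβ⟩ := hM _ (Submodule.map_eq_bot_iff.not.2 hK)
        fun ⟨f⟩ => hKN ⟨eK.trans (f.trans e)⟩
      exact ⟨β, hβ, IH β hβ eK.symm hzβ⟩

theorem ModuleZeta.exists_lt_of_injective {α : Ordinal.{v}} [Nontrivial N]
    (hM : ModuleZeta R α M) (hMu : ¬ IsUniformModule R M) {f : N →ₗ[R] M}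
    (hf : Function.Injective f) (hNM : IsEmpty (N ≃ₗ[R] M)) :
    ∃ β < α, ModuleZeta R β N := by
  rw [ModuleZeta] at hM
  rcases hM with ⟨-, hu⟩ | ⟨-, hM⟩
  · exact absurd hu hMu
  · let eN := LinearEquiv.ofInjective f hf
    obtain ⟨β, hβ, hzβ⟩ := hM _ (LinearMap.range_ne_bot_of_injective hf)
      fun ⟨g⟩ => hNM.false (eN.trans g)
    exact ⟨β, hβ, hzβ.of_linearEquiv eN.symm⟩

theorem nonempty_linearEquiv_of_hasCUDim [Nontrivial M] (hM : HasCUDim R M)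
    (hMu : ¬ IsUniformModule R M) (hNu : ¬ IsUniformModule R N) {f : N →ₗ[R] M}
    (hf : Function.Injective f) {g : M →ₗ[R] N} (hg : Function.Injective g) :
    Nonempty (N ≃ₗ[R] M) := by
  have : Nontrivial N := hg.nontrivial
  by_contra hNM
  have hNM : IsEmpty (N ≃ₗ[R] M) := not_nonempty_iff.1 hNM
  have hMN : IsEmpty (M ≃ₗ[R] N) := ⟨fun e => hNM.false e.symm⟩
  obtain ⟨α, hα⟩ := hM
  induction α using WellFoundedLT.induction with
  | ind α IH =>
    obtain ⟨β, hβα, hβ⟩ := hα.exists_lt_of_injective hMu hf hNM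
    obtain ⟨γ, hγβ, hγ⟩ := hβ.exists_lt_of_injective hNu hg hMN
    exact IH γ (hγβ.trans hβα) hγ

end CouniserialDimension

section Injective

variable {R : Type u} [Ring R] {P Q : Type v} [AddCommGroup P] [Module R P]
  [AddCommGroup Q] [Module R Q]

theorem Module.Injective.of_retract [Module.Injective R Q] (σ : P →ₗ[R] Q) (ρ : Q →ₗ[R] P)
    (hρσ : ρ ∘ₗ σ = LinearMap.id) : Module.Injective R P := by
  refine ⟨fun X Y _ _ _ _ f hf g => ?_⟩
  obtain ⟨h, hh⟩ := Module.Injective.out f hf (σ ∘ₗ g)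
  refine ⟨ρ ∘ₗ h, fun x => ?_⟩
  rw [LinearMap.comp_apply, hh]
  exact LinearMap.congr_fun hρσ (g x)

-- Unlike the instance `Module.Injective.pi`, this needs no `Small.{v} R`.
theorem Module.Injective.pi_of_injective {ι : Type} (M : ι → Type v)
    [∀ i, AddCommGroup (M i)] [∀ i, Module R (M i)] [∀ i, Module.Injective R (M i)] :
    Module.Injective R (∀ i, M i) := by
  refine ⟨fun X Y _ _ _ _ f hf g => ?_⟩
  choose h hh using fun i => Module.Injective.out f hf (LinearMap.proj i ∘ₗ g)
  exact ⟨LinearMap.pi h, fun x => funext fun i => hh i x⟩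

end Injective

namespace DirectSum

variable {R : Type u} [Ring R] {ι : Type*} {M : ι → Type*}
  [∀ i, AddCommGroup (M i)] [∀ i, Module R (M i)]

theorem exists_finset_apply_eq_zero {P : Type*} [AddCommGroup P] [Module R P]
    [Module.Finite R P] (σ : P →ₗ[R] ⨁ i, M i) : ∃ s : Finset ι, ∀ p, ∀ i ∉ s, σ p i = 0 := by
  classical
  obtain ⟨G, hG⟩ := Module.Finite.fg_top (R := R) (M := P)
  refine ⟨G.biUnion fun g => (σ g).support, fun p i hi => ?_⟩
  have hp : p ∈ Submodule.span R (G : Set P) := hG ▸ Submodule.mem_top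
  induction hp using Submodule.span_induction with
  | mem g hg =>
    exact DFinsupp.notMem_support_iff.1 fun h => hi (Finset.mem_biUnion.2 ⟨g, hg, h⟩)
  | zero => simp
  | add x y _ _ hx hy => simp [hx, hy]
  | smul r x _ hx => rw [map_smul, smul_apply, hx, smul_zero]

theorem lmk_apply_eq_self [DecidableEq ι] {s : Finset ι} {x : ⨁ i, M i} (hx : ∀ i ∉ s, x i = 0) :
    lmk R ι M s (fun i => x i) = x := by
  ext i
  by_cases hi : i ∈ s
  · exact mk_apply_of_mem hi
  · rw [hx i hi]
    exact mk_apply_of_notMem hi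

noncomputable def natLEquivProd (E : Type*) [AddCommGroup E] [Module R E] :
    (⨁ _ : ℕ, E) ≃ₗ[R] E × ⨁ _ : ℕ, E :=
  (lequivCongrLeft R (Denumerable.eqv (Option ℕ)).symm).trans (lequivProdDirectSum R)

end DirectSum

theorem Module.Injective.of_retract_directSum {R : Type u} [Ring R] {ι : Type} {M : ι → Type v}
    [∀ i, AddCommGroup (M i)] [∀ i, Module R (M i)] [∀ i, Module.Injective R (M i)]
    {P : Type v} [AddCommGroup P] [Module R P] [Module.Finite R P]
    (σ : P →ₗ[R] DirectSum ι M) (ρ : DirectSum ι M →ₗ[R] P) (hρσ : ρ ∘ₗ σ = LinearMap.id) :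
    Module.Injective R P := by
  classical
  obtain ⟨s, hs⟩ := DirectSum.exists_finset_apply_eq_zero σ
  have := Module.Injective.pi_of_injective (R := R) fun i : (s : Set ι) => M i
  refine Module.Injective.of_retract
    (LinearMap.pi fun i : (s : Set ι) => DirectSum.component R ι M i ∘ₗ σ)
    (ρ ∘ₗ DirectSum.lmk R ι M s) (LinearMap.ext fun p => ?_)
  change ρ (DirectSum.lmk R ι M s fun i => σ p i) = p
  rw [DirectSum.lmk_apply_eq_self (hs p)]
  exact LinearMap.congr_fun hρσ p

theorem stmt17_general (R : Type u) [Ring R] (P E : Type v) [AddCommGroup P] [Module R P]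
    [AddCommGroup E] [Module R E] [Nontrivial P]
    (hanti : ∀ N : Submodule R P, N ≠ ⊥ → Nonempty (P ≃ₗ[R] N))
    (i : P →ₗ[R] E) (hi : Function.Injective i) (hE : Module.Injective R E)
    (h : HasCUDim R (DirectSum ℕ fun _ : ℕ => E)) :
    Module.Injective R P := by
  have : Nontrivial E := hi.nontrivial
  obtain ⟨p, hp⟩ := exists_ne (0 : P)
  obtain ⟨φ⟩ := hanti (R ∙ p) (Submodule.span_singleton_eq_bot.not.2 hp)
  have : Module.Finite R P := Module.Finite.equiv φ.symm
  set X := DirectSum ℕ fun _ : ℕ => E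
  have : Nontrivial X := (DirectSum.of_injective (β := fun _ : ℕ => E) 0).nontrivial
  let e₀ : X ≃ₗ[R] E × X := DirectSum.natLEquivProd E
  have hXu : ¬ IsUniformModule R X := fun hX => not_isUniformModule_prod (hX.of_linearEquiv e₀)
  obtain ⟨e⟩ := nonempty_linearEquiv_of_hasCUDim h hXu not_isUniformModule_prod
    (f := e₀.symm ∘ₗ i.prodMap LinearMap.id)
    (e₀.symm.injective.comp (hi.prodMap Function.injective_id))
    (LinearMap.inr_injective (R := R) (M := P))
  exact Module.Injective.of_retract_directSum (e.toLinearMap ∘ₗ LinearMap.inl R P X)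
    (LinearMap.fst R P X ∘ₗ e.symm.toLinearMap) (by ext; simp)

/-- If `P` is an anti-coHopfian projective module whose injective hull `E`
satisfies that `⊕_{i=1}^∞ E` has couniserial dimension, then `P` is injective. -/
theorem stmt17 (R : Type u) [Ring R] (P E : Type v) [AddCommGroup P] [Module R P]
    [AddCommGroup E] [Module R E] [Nontrivial P]
    (hanti : ∀ N : Submodule R P, N ≠ ⊥ → Nonempty (P ≃ₗ[R] N))
    (hproj : Module.Projective R P)
    (i : P →ₗ[R] E) (hi : Function.Injective i) (hE : Module.Injective R E)
    (hess : IsEssentialSubmodule R (LinearMap.range i))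
    (h : HasCUDim R (DirectSum ℕ fun _ : ℕ => E)) :
    Module.Injective R P :=
  stmt17_general R P E hanti i hi hE h
end
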